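/- With B(z) = −3xy/(2r⁵) and C(z) = 3(x² − y²)/(4r⁵) on ℝ² \ {0}, the vector field (1/4)(∇²B · ∇C − ∇²C · ∇B)(z) equals (171/32) r⁻¹⁰ (y, −x), where ∇² denotes the Hessian matrix. -/

import Mathlib

open Real

/-- `B(z) = -3xy/(2r⁵)`. -/
noncomputable def fB (p : ℝ × ℝ) : ℝ :=
  -3 * p.1 * p.2 / (2 * (Real.sqrt (p.1 ^ 2 + p.2 ^ 2)) ^ 5)

/-- `C(z) = 3(x²-y²)/(4r⁵)`. -/
noncomputable def fC (p : ℝ × ℝ) : ℝ :=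
  3 * (p.1 ^ 2 - p.2 ^ 2) / (4 * (Real.sqrt (p.1 ^ 2 + p.2 ^ 2)) ^ 5)

noncomputable def fBx (p : ℝ × ℝ) : ℝ := deriv (fun t => fB (t, p.2)) p.1
noncomputable def fBy (p : ℝ × ℝ) : ℝ := deriv (fun t => fB (p.1, t)) p.2
noncomputable def fCx (p : ℝ × ℝ) : ℝ := deriv (fun t => fC (t, p.2)) p.1
noncomputable def fCy (p : ℝ × ℝ) : ℝ := deriv (fun t => fC (p.1, t)) p.2

noncomputable def fBxx (p : ℝ × ℝ) : ℝ := deriv (fun t => fBx (t, p.2)) p.1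
noncomputable def fBxy (p : ℝ × ℝ) : ℝ := deriv (fun t => fBx (p.1, t)) p.2
noncomputable def fByx (p : ℝ × ℝ) : ℝ := deriv (fun t => fBy (t, p.2)) p.1
noncomputable def fByy (p : ℝ × ℝ) : ℝ := deriv (fun t => fBy (p.1, t)) p.2
noncomputable def fCxx (p : ℝ × ℝ) : ℝ := deriv (fun t => fCx (t, p.2)) p.1
noncomputable def fCxy (p : ℝ × ℝ) : ℝ := deriv (fun t => fCx (p.1, t)) p.2
noncomputable def fCyx (p : ℝ × ℝ) : ℝ := deriv (fun t => fCy (t, p.2)) p.1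
noncomputable def fCyy (p : ℝ × ℝ) : ℝ := deriv (fun t => fCy (p.1, t)) p.2

lemma hs_pos (q : ℝ × ℝ) (hq : q ≠ 0) : 0 < q.1 ^ 2 + q.2 ^ 2 := by
  rcases lt_or_eq_of_le (by positivity : (0:ℝ) ≤ q.1 ^ 2 + q.2 ^ 2) with h | h
  · exact h
  · exfalso
    apply hq
    have h1 : q.1 = 0 := by nlinarith [sq_nonneg q.1, sq_nonneg q.2]
    have h2 : q.2 = 0 := by nlinarith [sq_nonneg q.1, sq_nonneg q.2]
    exact Prod.ext h1 h2

lemma quot_rule5 (c x k : ℝ) (h : 0 < x ^ 2 + c) (hk : k ≠ 0)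
    {N : ℝ → ℝ} {N' : ℝ} (hN : HasDerivAt N N' x) :
    HasDerivAt (fun t => N t / (k * Real.sqrt (t ^ 2 + c) ^ 5))
      ((N' * (x ^ 2 + c) - 5 * x * N x) / (k * Real.sqrt (x ^ 2 + c) ^ 7)) x := by
  have hR0 : 0 < Real.sqrt (x ^ 2 + c) := Real.sqrt_pos.2 h
  have h1 : HasDerivAt (fun t : ℝ => t ^ 2 + c) (2 * x) x := by
    simpa using (hasDerivAt_pow 2 x).add_const c
  have h2 := (Real.hasDerivAt_sqrt h.ne').comp x h1
  have h3 := (h2.pow 5).const_mul k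
  have hden : k * Real.sqrt (x ^ 2 + c) ^ 5 ≠ 0 := mul_ne_zero hk (pow_ne_zero _ hR0.ne')
  have h4 := hN.div h3 hden
  convert h4 using 1
  rfl
  rfl
  rfl
  simp only [Function.comp_apply, Pi.pow_apply]
  set R := Real.sqrt (x ^ 2 + c) with hR
  have hsq : R ^ 2 = x ^ 2 + c := Real.sq_sqrt h.le
  rw [← hsq]
  field_simp
  ring

lemma quot_rule7 (c x k : ℝ) (h : 0 < x ^ 2 + c) (hk : k ≠ 0)
    {N : ℝ → ℝ} {N' : ℝ} (hN : HasDerivAt N N' x) :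
    HasDerivAt (fun t => N t / (k * Real.sqrt (t ^ 2 + c) ^ 7))
      ((N' * (x ^ 2 + c) - 7 * x * N x) / (k * Real.sqrt (x ^ 2 + c) ^ 9)) x := by
  have hR0 : 0 < Real.sqrt (x ^ 2 + c) := Real.sqrt_pos.2 h
  have h1 : HasDerivAt (fun t : ℝ => t ^ 2 + c) (2 * x) x := by
    simpa using (hasDerivAt_pow 2 x).add_const c
  have h2 := (Real.hasDerivAt_sqrt h.ne').comp x h1
  have h3 := (h2.pow 7).const_mul k
  have hden : k * Real.sqrt (x ^ 2 + c) ^ 7 ≠ 0 := mul_ne_zero hk (pow_ne_zero _ hR0.ne')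
  have h4 := hN.div h3 hden
  convert h4 using 1
  rfl
  rfl
  rfl
  simp only [Function.comp_apply, Pi.pow_apply]
  set R := Real.sqrt (x ^ 2 + c) with hR
  have hsq : R ^ 2 = x ^ 2 + c := Real.sq_sqrt h.le
  rw [← hsq]
  field_simp
  ring

lemma ev1 (x y : ℝ) (h : 0 < x ^ 2 + y ^ 2) : ∀ᶠ t in nhds x, 0 < t ^ 2 + y ^ 2 := by
  have hc : Continuous fun t : ℝ => t ^ 2 + y ^ 2 := by continuity
  have ho : IsOpen {t : ℝ | 0 < t ^ 2 + y ^ 2} := isOpen_lt continuous_const hc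
  exact eventually_nhds_iff.mpr ⟨{t : ℝ | 0 < t ^ 2 + y ^ 2}, fun t ht => ht, ho, h⟩

lemma fBx_eq (x y : ℝ) (h : 0 < x ^ 2 + y ^ 2) :
    deriv (fun t => fB (t, y)) x =
      (12 * x ^ 2 * y - 3 * y ^ 3) * Real.sqrt (x ^ 2 + y ^ 2) / (2 * (x ^ 2 + y ^ 2) ^ 4) := by
  have hN : HasDerivAt (fun t : ℝ => -3 * t * y) (-3 * y) x := by
    simpa using ((hasDerivAt_id x).const_mul (-3 : ℝ)).mul_const y
  have hfun : (fun t => fB (t, y)) = fun t => (-3 * t * y) / (2 * Real.sqrt (t ^ 2 + y ^ 2) ^ 5) := by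
    funext t
    simp only [fB, fC]
    try ring
  rw [hfun]
  have hd := (quot_rule5 (y ^ 2) x 2 h (by norm_num) hN).deriv
  refine hd.trans ?_
  set R := Real.sqrt (x ^ 2 + y ^ 2) with hRdef
  have hR0 : 0 < R := Real.sqrt_pos.2 h
  have hsq : R ^ 2 = x ^ 2 + y ^ 2 := Real.sq_sqrt h.le
  rw [← hsq]
  field_simp
  linear_combination (-3 * y) * hsq  -- MARK fBx_eq

lemma fBy_eq (x y : ℝ) (h : 0 < x ^ 2 + y ^ 2) :
    deriv (fun t => fB (x, t)) y =
      (12 * x * y ^ 2 - 3 * x ^ 3) * Real.sqrt (x ^ 2 + y ^ 2) / (2 * (x ^ 2 + y ^ 2) ^ 4) := by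
  have h' : 0 < y ^ 2 + x ^ 2 := by linarith
  have hN : HasDerivAt (fun t : ℝ => -3 * x * t) (-3 * x) y := by
    simpa using (hasDerivAt_id y).const_mul (-3 * x)
  have hfun : (fun t => fB (x, t)) = fun t => (-3 * x * t) / (2 * Real.sqrt (t ^ 2 + x ^ 2) ^ 5) := by
    funext t
    simp only [fB, fC]
    rw [add_comm (x ^ 2) (t ^ 2)]
    try ring
  rw [hfun]
  have hd := (quot_rule5 (x ^ 2) y 2 h' (by norm_num) hN).deriv
  refine hd.trans ?_
  rw [add_comm (y ^ 2) (x ^ 2)]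
  set R := Real.sqrt (x ^ 2 + y ^ 2) with hRdef
  have hR0 : 0 < R := Real.sqrt_pos.2 h
  have hsq : R ^ 2 = x ^ 2 + y ^ 2 := Real.sq_sqrt h.le
  rw [← hsq]
  field_simp
  linear_combination (-3 * x) * hsq  -- MARK fBy_eq

lemma fCx_eq (x y : ℝ) (h : 0 < x ^ 2 + y ^ 2) :
    deriv (fun t => fC (t, y)) x =
      (-9 * x ^ 3 + 21 * x * y ^ 2) * Real.sqrt (x ^ 2 + y ^ 2) / (4 * (x ^ 2 + y ^ 2) ^ 4) := by
  have hN : HasDerivAt (fun t : ℝ => 3 * (t ^ 2 - y ^ 2)) (6 * x) x := by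
    have h0 : HasDerivAt (fun t : ℝ => t ^ 2) (2 * x) x := by simpa using hasDerivAt_pow 2 x
    have h1 := (h0.sub_const (y ^ 2)).const_mul (3 : ℝ)
    have he : (3:ℝ) * (2 * x) = 6 * x := by ring
    exact he ▸ h1
  have hfun : (fun t => fC (t, y)) = fun t => (3 * (t ^ 2 - y ^ 2)) / (4 * Real.sqrt (t ^ 2 + y ^ 2) ^ 5) := by
    funext t
    simp only [fB, fC]
    try ring
  rw [hfun]
  have hd := (quot_rule5 (y ^ 2) x 4 h (by norm_num) hN).deriv
  refine hd.trans ?_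
  set R := Real.sqrt (x ^ 2 + y ^ 2) with hRdef
  have hR0 : 0 < R := Real.sqrt_pos.2 h
  have hsq : R ^ 2 = x ^ 2 + y ^ 2 := Real.sq_sqrt h.le
  rw [← hsq]
  field_simp
  linear_combination (6 * x) * hsq  -- MARK fCx_eq

lemma fCy_eq (x y : ℝ) (h : 0 < x ^ 2 + y ^ 2) :
    deriv (fun t => fC (x, t)) y =
      (9 * y ^ 3 - 21 * x ^ 2 * y) * Real.sqrt (x ^ 2 + y ^ 2) / (4 * (x ^ 2 + y ^ 2) ^ 4) := by
  have h' : 0 < y ^ 2 + x ^ 2 := by linarith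
  have hN : HasDerivAt (fun t : ℝ => 3 * (x ^ 2 - t ^ 2)) (-6 * y) y := by
    have h0 : HasDerivAt (fun t : ℝ => t ^ 2) (2 * y) y := by simpa using hasDerivAt_pow 2 y
    have h1 := ((hasDerivAt_const y (x ^ 2)).sub h0).const_mul (3 : ℝ)
    have he : (3:ℝ) * (0 - 2 * y) = -6 * y := by ring
    exact he ▸ h1
  have hfun : (fun t => fC (x, t)) = fun t => (3 * (x ^ 2 - t ^ 2)) / (4 * Real.sqrt (t ^ 2 + x ^ 2) ^ 5) := by
    funext t
    simp only [fB, fC]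
    rw [add_comm (x ^ 2) (t ^ 2)]
    try ring
  rw [hfun]
  have hd := (quot_rule5 (x ^ 2) y 4 h' (by norm_num) hN).deriv
  refine hd.trans ?_
  rw [add_comm (y ^ 2) (x ^ 2)]
  set R := Real.sqrt (x ^ 2 + y ^ 2) with hRdef
  have hR0 : 0 < R := Real.sqrt_pos.2 h
  have hsq : R ^ 2 = x ^ 2 + y ^ 2 := Real.sq_sqrt h.le
  rw [← hsq]
  field_simp
  linear_combination (-6 * y) * hsq  -- MARK fCy_eq

lemma fBxx_eq (x y : ℝ) (h : 0 < x ^ 2 + y ^ 2) :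
    deriv (fun t => fBx (t, y)) x =
      (-60 * x ^ 3 * y + 45 * x * y ^ 3) * Real.sqrt (x ^ 2 + y ^ 2) / (2 * (x ^ 2 + y ^ 2) ^ 5) := by
  have hev : (fun t => fBx (t, y)) =ᶠ[nhds x] fun t => (12 * t ^ 2 * y - 3 * y ^ 3) / (2 * Real.sqrt (t ^ 2 + y ^ 2) ^ 7) := by
    filter_upwards [ev1 x y h] with t ht
    have he := fBx_eq t y ht
    show deriv _ _ = _
    rw [he]
    set Rt := Real.sqrt (t ^ 2 + y ^ 2) with hRt
    have htpos : 0 < t ^ 2 + y ^ 2 := by linarith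
    have hRt0 : 0 < Rt := Real.sqrt_pos.2 htpos
    have hsqt : Rt ^ 2 = t ^ 2 + y ^ 2 := Real.sq_sqrt htpos.le
    rw [← hsqt]
    field_simp
  rw [hev.deriv_eq]
  have hN : HasDerivAt (fun t : ℝ => 12 * t ^ 2 * y - 3 * y ^ 3) (24 * x * y) x := by
    have h0 : HasDerivAt (fun t : ℝ => t ^ 2) (2 * x) x := by simpa using hasDerivAt_pow 2 x
    have h1 := ((h0.const_mul (12 : ℝ)).mul_const y).sub_const (3 * y ^ 3)
    have he : (12:ℝ) * (2 * x) * y = 24 * x * y := by ring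
    exact he ▸ h1
  have hd := (quot_rule7 (y ^ 2) x 2 h (by norm_num) hN).deriv
  refine hd.trans ?_
  set R := Real.sqrt (x ^ 2 + y ^ 2) with hRdef
  have hR0 : 0 < R := Real.sqrt_pos.2 h
  have hsq : R ^ 2 = x ^ 2 + y ^ 2 := Real.sq_sqrt h.le
  rw [← hsq]
  field_simp
  linear_combination (24 * x * y) * hsq  -- MARK fBxx_eq

lemma fBxy_eq (x y : ℝ) (h : 0 < x ^ 2 + y ^ 2) :
    deriv (fun t => fBx (x, t)) y =
      (12 * x ^ 4 - 81 * x ^ 2 * y ^ 2 + 12 * y ^ 4) * Real.sqrt (x ^ 2 + y ^ 2) / (2 * (x ^ 2 + y ^ 2) ^ 5) := by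
  have h' : 0 < y ^ 2 + x ^ 2 := by linarith
  have hev : (fun t => fBx (x, t)) =ᶠ[nhds y] fun t => (12 * x ^ 2 * t - 3 * t ^ 3) / (2 * Real.sqrt (t ^ 2 + x ^ 2) ^ 7) := by
    filter_upwards [ev1 y x h'] with t ht
    have he := fBx_eq x t (by linarith)
    show deriv _ _ = _
    rw [he]
    have ht' : 0 < x ^ 2 + t ^ 2 := by linarith
    rw [add_comm (x ^ 2) (t ^ 2)] at *
    set Rt := Real.sqrt (t ^ 2 + x ^ 2) with hRt
    have htpos : 0 < t ^ 2 + x ^ 2 := by linarith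
    have hRt0 : 0 < Rt := Real.sqrt_pos.2 htpos
    have hsqt : Rt ^ 2 = t ^ 2 + x ^ 2 := Real.sq_sqrt htpos.le
    rw [← hsqt]
    field_simp
  rw [hev.deriv_eq]
  have hN : HasDerivAt (fun t : ℝ => 12 * x ^ 2 * t - 3 * t ^ 3) (12 * x ^ 2 - 9 * y ^ 2) y := by
    have h3 : HasDerivAt (fun t : ℝ => t ^ 3) (3 * y ^ 2) y := by simpa using hasDerivAt_pow 3 y
    have h1 := ((hasDerivAt_id y).const_mul (12 * x ^ 2)).sub (h3.const_mul (3:ℝ))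
    have he : 12 * x ^ 2 * 1 - (3:ℝ) * (3 * y ^ 2) = 12 * x ^ 2 - 9 * y ^ 2 := by ring
    exact he ▸ h1
  have hd := (quot_rule7 (x ^ 2) y 2 h' (by norm_num) hN).deriv
  refine hd.trans ?_
  rw [add_comm (y ^ 2) (x ^ 2)]
  set R := Real.sqrt (x ^ 2 + y ^ 2) with hRdef
  have hR0 : 0 < R := Real.sqrt_pos.2 h
  have hsq : R ^ 2 = x ^ 2 + y ^ 2 := Real.sq_sqrt h.le
  rw [← hsq]
  field_simp
  linear_combination (-9 * y ^ 2 + 12 * x ^ 2) * hsq  -- MARK fBxy_eq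

lemma fByx_eq (x y : ℝ) (h : 0 < x ^ 2 + y ^ 2) :
    deriv (fun t => fBy (t, y)) x =
      (12 * x ^ 4 - 81 * x ^ 2 * y ^ 2 + 12 * y ^ 4) * Real.sqrt (x ^ 2 + y ^ 2) / (2 * (x ^ 2 + y ^ 2) ^ 5) := by
  have hev : (fun t => fBy (t, y)) =ᶠ[nhds x] fun t => (12 * y ^ 2 * t - 3 * t ^ 3) / (2 * Real.sqrt (t ^ 2 + y ^ 2) ^ 7) := by
    filter_upwards [ev1 x y h] with t ht
    have he := fBy_eq t y ht
    show deriv _ _ = _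
    rw [he]
    set Rt := Real.sqrt (t ^ 2 + y ^ 2) with hRt
    have htpos : 0 < t ^ 2 + y ^ 2 := by linarith
    have hRt0 : 0 < Rt := Real.sqrt_pos.2 htpos
    have hsqt : Rt ^ 2 = t ^ 2 + y ^ 2 := Real.sq_sqrt htpos.le
    rw [← hsqt]
    field_simp
  rw [hev.deriv_eq]
  have hN : HasDerivAt (fun t : ℝ => 12 * y ^ 2 * t - 3 * t ^ 3) (12 * y ^ 2 - 9 * x ^ 2) x := by
    have h3 : HasDerivAt (fun t : ℝ => t ^ 3) (3 * x ^ 2) x := by simpa using hasDerivAt_pow 3 x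
    have h1 := ((hasDerivAt_id x).const_mul (12 * y ^ 2)).sub (h3.const_mul (3:ℝ))
    have he : 12 * y ^ 2 * 1 - (3:ℝ) * (3 * x ^ 2) = 12 * y ^ 2 - 9 * x ^ 2 := by ring
    exact he ▸ h1
  have hd := (quot_rule7 (y ^ 2) x 2 h (by norm_num) hN).deriv
  refine hd.trans ?_
  set R := Real.sqrt (x ^ 2 + y ^ 2) with hRdef
  have hR0 : 0 < R := Real.sqrt_pos.2 h
  have hsq : R ^ 2 = x ^ 2 + y ^ 2 := Real.sq_sqrt h.le
  rw [← hsq]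
  field_simp
  linear_combination (12 * y ^ 2 - 9 * x ^ 2) * hsq  -- MARK fByx_eq

lemma fByy_eq (x y : ℝ) (h : 0 < x ^ 2 + y ^ 2) :
    deriv (fun t => fBy (x, t)) y =
      (45 * x ^ 3 * y - 60 * x * y ^ 3) * Real.sqrt (x ^ 2 + y ^ 2) / (2 * (x ^ 2 + y ^ 2) ^ 5) := by
  have h' : 0 < y ^ 2 + x ^ 2 := by linarith
  have hev : (fun t => fBy (x, t)) =ᶠ[nhds y] fun t => (12 * x * t ^ 2 - 3 * x ^ 3) / (2 * Real.sqrt (t ^ 2 + x ^ 2) ^ 7) := by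
    filter_upwards [ev1 y x h'] with t ht
    have he := fBy_eq x t (by linarith)
    show deriv _ _ = _
    rw [he]
    have ht' : 0 < x ^ 2 + t ^ 2 := by linarith
    rw [add_comm (x ^ 2) (t ^ 2)] at *
    set Rt := Real.sqrt (t ^ 2 + x ^ 2) with hRt
    have htpos : 0 < t ^ 2 + x ^ 2 := by linarith
    have hRt0 : 0 < Rt := Real.sqrt_pos.2 htpos
    have hsqt : Rt ^ 2 = t ^ 2 + x ^ 2 := Real.sq_sqrt htpos.le
    rw [← hsqt]
    field_simp
  rw [hev.deriv_eq]
  have hN : HasDerivAt (fun t : ℝ => 12 * x * t ^ 2 - 3 * x ^ 3) (24 * x * y) y := by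
    have h0 : HasDerivAt (fun t : ℝ => t ^ 2) (2 * y) y := by simpa using hasDerivAt_pow 2 y
    have h1 := ((h0.const_mul (12 * x)).sub_const (3 * x ^ 3))
    have he : 12 * x * (2 * y) = 24 * x * y := by ring
    exact he ▸ h1
  have hd := (quot_rule7 (x ^ 2) y 2 h' (by norm_num) hN).deriv
  refine hd.trans ?_
  rw [add_comm (y ^ 2) (x ^ 2)]
  set R := Real.sqrt (x ^ 2 + y ^ 2) with hRdef
  have hR0 : 0 < R := Real.sqrt_pos.2 h
  have hsq : R ^ 2 = x ^ 2 + y ^ 2 := Real.sq_sqrt h.le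
  rw [← hsq]
  field_simp
  linear_combination (24 * x * y) * hsq  -- MARK fByy_eq

lemma fCxx_eq (x y : ℝ) (h : 0 < x ^ 2 + y ^ 2) :
    deriv (fun t => fCx (t, y)) x =
      (36 * x ^ 4 - 153 * x ^ 2 * y ^ 2 + 21 * y ^ 4) * Real.sqrt (x ^ 2 + y ^ 2) / (4 * (x ^ 2 + y ^ 2) ^ 5) := by
  have hev : (fun t => fCx (t, y)) =ᶠ[nhds x] fun t => (-9 * t ^ 3 + 21 * y ^ 2 * t) / (4 * Real.sqrt (t ^ 2 + y ^ 2) ^ 7) := by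
    filter_upwards [ev1 x y h] with t ht
    have he := fCx_eq t y ht
    show deriv _ _ = _
    rw [he]
    set Rt := Real.sqrt (t ^ 2 + y ^ 2) with hRt
    have htpos : 0 < t ^ 2 + y ^ 2 := by linarith
    have hRt0 : 0 < Rt := Real.sqrt_pos.2 htpos
    have hsqt : Rt ^ 2 = t ^ 2 + y ^ 2 := Real.sq_sqrt htpos.le
    rw [← hsqt]
    field_simp
  rw [hev.deriv_eq]
  have hN : HasDerivAt (fun t : ℝ => -9 * t ^ 3 + 21 * y ^ 2 * t) (-27 * x ^ 2 + 21 * y ^ 2) x := by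
    have h3 : HasDerivAt (fun t : ℝ => t ^ 3) (3 * x ^ 2) x := by simpa using hasDerivAt_pow 3 x
    have h1 := (h3.const_mul (-9:ℝ)).add ((hasDerivAt_id x).const_mul (21 * y ^ 2))
    have he : (-9:ℝ) * (3 * x ^ 2) + 21 * y ^ 2 * 1 = -27 * x ^ 2 + 21 * y ^ 2 := by ring
    exact he ▸ h1
  have hd := (quot_rule7 (y ^ 2) x 4 h (by norm_num) hN).deriv
  refine hd.trans ?_
  set R := Real.sqrt (x ^ 2 + y ^ 2) with hRdef
  have hR0 : 0 < R := Real.sqrt_pos.2 h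
  have hsq : R ^ 2 = x ^ 2 + y ^ 2 := Real.sq_sqrt h.le
  rw [← hsq]
  field_simp
  linear_combination (21 * y ^ 2 - 27 * x ^ 2) * hsq  -- MARK fCxx_eq

lemma fCxy_eq (x y : ℝ) (h : 0 < x ^ 2 + y ^ 2) :
    deriv (fun t => fCx (x, t)) y =
      (105 * x ^ 3 * y - 105 * x * y ^ 3) * Real.sqrt (x ^ 2 + y ^ 2) / (4 * (x ^ 2 + y ^ 2) ^ 5) := by
  have h' : 0 < y ^ 2 + x ^ 2 := by linarith
  have hev : (fun t => fCx (x, t)) =ᶠ[nhds y] fun t => (-9 * x ^ 3 + 21 * x * t ^ 2) / (4 * Real.sqrt (t ^ 2 + x ^ 2) ^ 7) := by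
    filter_upwards [ev1 y x h'] with t ht
    have he := fCx_eq x t (by linarith)
    show deriv _ _ = _
    rw [he]
    have ht' : 0 < x ^ 2 + t ^ 2 := by linarith
    rw [add_comm (x ^ 2) (t ^ 2)] at *
    set Rt := Real.sqrt (t ^ 2 + x ^ 2) with hRt
    have htpos : 0 < t ^ 2 + x ^ 2 := by linarith
    have hRt0 : 0 < Rt := Real.sqrt_pos.2 htpos
    have hsqt : Rt ^ 2 = t ^ 2 + x ^ 2 := Real.sq_sqrt htpos.le
    rw [← hsqt]
    field_simp
  rw [hev.deriv_eq]
  have hN : HasDerivAt (fun t : ℝ => -9 * x ^ 3 + 21 * x * t ^ 2) (42 * x * y) y := by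
    have h0 : HasDerivAt (fun t : ℝ => t ^ 2) (2 * y) y := by simpa using hasDerivAt_pow 2 y
    have h1 := (hasDerivAt_const y (-9 * x ^ 3)).add (h0.const_mul (21 * x))
    have he : (0:ℝ) + 21 * x * (2 * y) = 42 * x * y := by ring
    exact he ▸ h1
  have hd := (quot_rule7 (x ^ 2) y 4 h' (by norm_num) hN).deriv
  refine hd.trans ?_
  rw [add_comm (y ^ 2) (x ^ 2)]
  set R := Real.sqrt (x ^ 2 + y ^ 2) with hRdef
  have hR0 : 0 < R := Real.sqrt_pos.2 h
  have hsq : R ^ 2 = x ^ 2 + y ^ 2 := Real.sq_sqrt h.le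
  rw [← hsq]
  field_simp
  linear_combination (42 * x * y) * hsq  -- MARK fCxy_eq

lemma fCyx_eq (x y : ℝ) (h : 0 < x ^ 2 + y ^ 2) :
    deriv (fun t => fCy (t, y)) x =
      (105 * x ^ 3 * y - 105 * x * y ^ 3) * Real.sqrt (x ^ 2 + y ^ 2) / (4 * (x ^ 2 + y ^ 2) ^ 5) := by
  have hev : (fun t => fCy (t, y)) =ᶠ[nhds x] fun t => (9 * y ^ 3 - 21 * t ^ 2 * y) / (4 * Real.sqrt (t ^ 2 + y ^ 2) ^ 7) := by
    filter_upwards [ev1 x y h] with t ht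
    have he := fCy_eq t y ht
    show deriv _ _ = _
    rw [he]
    set Rt := Real.sqrt (t ^ 2 + y ^ 2) with hRt
    have htpos : 0 < t ^ 2 + y ^ 2 := by linarith
    have hRt0 : 0 < Rt := Real.sqrt_pos.2 htpos
    have hsqt : Rt ^ 2 = t ^ 2 + y ^ 2 := Real.sq_sqrt htpos.le
    rw [← hsqt]
    field_simp
  rw [hev.deriv_eq]
  have hN : HasDerivAt (fun t : ℝ => 9 * y ^ 3 - 21 * t ^ 2 * y) (-42 * x * y) x := by
    have h0 : HasDerivAt (fun t : ℝ => t ^ 2) (2 * x) x := by simpa using hasDerivAt_pow 2 x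
    have h1 := (hasDerivAt_const x (9 * y ^ 3)).sub ((h0.const_mul (21:ℝ)).mul_const y)
    have he : (0:ℝ) - 21 * (2 * x) * y = -42 * x * y := by ring
    exact he ▸ h1
  have hd := (quot_rule7 (y ^ 2) x 4 h (by norm_num) hN).deriv
  refine hd.trans ?_
  set R := Real.sqrt (x ^ 2 + y ^ 2) with hRdef
  have hR0 : 0 < R := Real.sqrt_pos.2 h
  have hsq : R ^ 2 = x ^ 2 + y ^ 2 := Real.sq_sqrt h.le
  rw [← hsq]
  field_simp
  linear_combination (-42 * x * y) * hsq  -- MARK fCyx_eq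

lemma fCyy_eq (x y : ℝ) (h : 0 < x ^ 2 + y ^ 2) :
    deriv (fun t => fCy (x, t)) y =
      (-21 * x ^ 4 + 153 * x ^ 2 * y ^ 2 - 36 * y ^ 4) * Real.sqrt (x ^ 2 + y ^ 2) / (4 * (x ^ 2 + y ^ 2) ^ 5) := by
  have h' : 0 < y ^ 2 + x ^ 2 := by linarith
  have hev : (fun t => fCy (x, t)) =ᶠ[nhds y] fun t => (9 * t ^ 3 - 21 * x ^ 2 * t) / (4 * Real.sqrt (t ^ 2 + x ^ 2) ^ 7) := by
    filter_upwards [ev1 y x h'] with t ht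
    have he := fCy_eq x t (by linarith)
    show deriv _ _ = _
    rw [he]
    have ht' : 0 < x ^ 2 + t ^ 2 := by linarith
    rw [add_comm (x ^ 2) (t ^ 2)] at *
    set Rt := Real.sqrt (t ^ 2 + x ^ 2) with hRt
    have htpos : 0 < t ^ 2 + x ^ 2 := by linarith
    have hRt0 : 0 < Rt := Real.sqrt_pos.2 htpos
    have hsqt : Rt ^ 2 = t ^ 2 + x ^ 2 := Real.sq_sqrt htpos.le
    rw [← hsqt]
    field_simp
  rw [hev.deriv_eq]
  have hN : HasDerivAt (fun t : ℝ => 9 * t ^ 3 - 21 * x ^ 2 * t) (27 * y ^ 2 - 21 * x ^ 2) y := by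
    have h3 : HasDerivAt (fun t : ℝ => t ^ 3) (3 * y ^ 2) y := by simpa using hasDerivAt_pow 3 y
    have h1 := (h3.const_mul (9:ℝ)).sub ((hasDerivAt_id y).const_mul (21 * x ^ 2))
    have he : (9:ℝ) * (3 * y ^ 2) - 21 * x ^ 2 * 1 = 27 * y ^ 2 - 21 * x ^ 2 := by ring
    exact he ▸ h1
  have hd := (quot_rule7 (x ^ 2) y 4 h' (by norm_num) hN).deriv
  refine hd.trans ?_
  rw [add_comm (y ^ 2) (x ^ 2)]
  set R := Real.sqrt (x ^ 2 + y ^ 2) with hRdef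
  have hR0 : 0 < R := Real.sqrt_pos.2 h
  have hsq : R ^ 2 = x ^ 2 + y ^ 2 := Real.sq_sqrt h.le
  rw [← hsq]
  field_simp
  linear_combination (27 * y ^ 2 - 21 * x ^ 2) * hsq  -- MARK fCyy_eq


/-- `(1/4)(∇²B·∇C − ∇²C·∇B)(z) = (171/32) r⁻¹⁰ (y, -x)`
on `ℝ² \ {0}`, componentwise. -/
theorem stmt_13 (p : ℝ × ℝ) (hp : p ≠ 0) :
    (1 / 4) * ((fBxx p * fCx p + fBxy p * fCy p) -
        (fCxx p * fBx p + fCxy p * fBy p)) =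
      (171 / 32) * (Real.sqrt (p.1 ^ 2 + p.2 ^ 2)) ^ (-10 : ℤ) * p.2 ∧
    (1 / 4) * ((fByx p * fCx p + fByy p * fCy p) -
        (fCyx p * fBx p + fCyy p * fBy p)) =
      (171 / 32) * (Real.sqrt (p.1 ^ 2 + p.2 ^ 2)) ^ (-10 : ℤ) * (-p.1) := by
  have hs := hs_pos p hp
  have e1 : fBx p = _ := fBx_eq p.1 p.2 hs
  have e2 : fBy p = _ := fBy_eq p.1 p.2 hs
  have e3 : fCx p = _ := fCx_eq p.1 p.2 hs
  have e4 : fCy p = _ := fCy_eq p.1 p.2 hs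
  have e5 : fBxx p = _ := fBxx_eq p.1 p.2 hs
  have e6 : fBxy p = _ := fBxy_eq p.1 p.2 hs
  have e7 : fByx p = _ := fByx_eq p.1 p.2 hs
  have e8 : fByy p = _ := fByy_eq p.1 p.2 hs
  have e9 : fCxx p = _ := fCxx_eq p.1 p.2 hs
  have e10 : fCxy p = _ := fCxy_eq p.1 p.2 hs
  have e11 : fCyx p = _ := fCyx_eq p.1 p.2 hs
  have e12 : fCyy p = _ := fCyy_eq p.1 p.2 hs
  have hz : Real.sqrt (p.1 ^ 2 + p.2 ^ 2) ^ (-10 : ℤ) = ((p.1 ^ 2 + p.2 ^ 2) ^ 5)⁻¹ := by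
    have h10 : Real.sqrt (p.1 ^ 2 + p.2 ^ 2) ^ (10 : ℕ) = (p.1 ^ 2 + p.2 ^ 2) ^ 5 := by
      rw [show Real.sqrt (p.1 ^ 2 + p.2 ^ 2) ^ (10 : ℕ) =
          (Real.sqrt (p.1 ^ 2 + p.2 ^ 2) ^ 2) ^ 5 from by ring, Real.sq_sqrt hs.le]
    have hneg : ((-10 : ℤ)) = -((10 : ℕ) : ℤ) := by norm_num
    rw [hneg, zpow_neg, zpow_natCast, h10]
  constructor
  · rw [e5, e3, e6, e4, e9, e1, e10, e2, hz]
    set R := Real.sqrt (p.1 ^ 2 + p.2 ^ 2) with hRdef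
    have hR0 : 0 < R := Real.sqrt_pos.2 hs
    have hsq : R ^ 2 = p.1 ^ 2 + p.2 ^ 2 := Real.sq_sqrt hs.le
    have hs0 : p.1 ^ 2 + p.2 ^ 2 ≠ 0 := hs.ne'
    field_simp
    linear_combination (5472 * p.2 ^ 7 + 16416 * p.1 ^ 2 * p.2 ^ 5 + 16416 * p.1 ^ 4 * p.2 ^ 3 + 5472 * p.1 ^ 6 * p.2) * hsq
  · rw [e7, e3, e8, e4, e11, e1, e12, e2, hz]
    set R := Real.sqrt (p.1 ^ 2 + p.2 ^ 2) with hRdef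
    have hR0 : 0 < R := Real.sqrt_pos.2 hs
    have hsq : R ^ 2 = p.1 ^ 2 + p.2 ^ 2 := Real.sq_sqrt hs.le
    have hs0 : p.1 ^ 2 + p.2 ^ 2 ≠ 0 := hs.ne'
    field_simp
    linear_combination (-5472 * p.1 * p.2 ^ 6 - 16416 * p.1 ^ 3 * p.2 ^ 4 - 16416 * p.1 ^ 5 * p.2 ^ 2 - 5472 * p.1 ^ 7) * hsq
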